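/- arXiv:1710.10476 — 4 statements merged into one kernel-verified Lean document; each statement's English description precedes it below -/
import Mathlib

section
/- Let K be a category with coproducts in which all coproduct injections are monomorphisms, and let λ be a regular cardinal. If g : A → B is a strong epimorphism in K and A is nearly λ-presentable, then B is nearly λ-presentable. -/
/-!
Every map `f : B ⟶ ∐ K` factors through a subcoproduct of size `< κ`: the map `g ≫ f` does,
because `A` is nearly `κ`-presentable, and the strong epimorphism `g` lifts against the
subcoproduct injection, a monomorphism. Since all subcoproduct injections are monomorphisms and
the subcoproducts are directed under union, such factorizations through the subcoproducts are
exactly the elements of the colimit of `K(B, ∐_J K)`, so `K(B, -)` preserves the special colimit.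
-/

universe w v u u₁ u₂

open CategoryTheory CategoryTheory.Limits Opposite

namespace NLP

variable {C : Type u} [Category.{v} C]

/-- The poset of subsets of `I` of cardinality `< κ`, ordered by inclusion. -/
abbrev SmallSub (κ : Cardinal.{w}) (I : Type w) : Type w :=
  {J : Set I // Cardinal.mk J < κ}

section
variable [HasCoproducts.{w} C]

/-- The diagram of subcoproducts `∐_{j ∈ J} K_j`, for `J ⊆ I` with `|J| < κ`,
with subcoproduct injections as connecting morphisms. -/
noncomputable def subDiag (κ : Cardinal.{w}) {I : Type w} (K : I → C) :
    SmallSub κ I ⥤ C where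
  obj J := ∐ (fun j : J.1 => K j)
  map {J J'} f :=
    Sigma.desc (fun j => Sigma.ι (fun j' : J'.1 => K j') ⟨j.1, leOfHom f j.2⟩)
  map_id J := by
    ext j
    simp
  map_comp {J J' J''} f g := by
    ext j
    simp

/-- The cocone on the subcoproduct diagram with vertex the full coproduct `∐ K`;
this is the "special κ-directed colimit" expressing `∐ K` as the κ-directed colimit
of its subcoproducts of size `< κ`. -/
noncomputable def subCocone (κ : Cardinal.{w}) {I : Type w} (K : I → C) :
    Cocone (subDiag (C := C) κ K) where
  pt := ∐ K
  ι :=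
    { app := fun J => Sigma.desc (fun j => Sigma.ι K j.1)
      naturality := by
        intro J J' f
        dsimp only [subDiag]
        ext j
        simp }

/-- The subcoproduct injection `∐_{j ∈ J} K_j ⟶ ∐_{i ∈ I} K_i`. -/
noncomputable def subInj (κ : Cardinal.{w}) {I : Type w} (K : I → C) (J : SmallSub κ I) :
    (∐ fun j : J.1 => K j) ⟶ ∐ K :=
  Sigma.desc (fun j => Sigma.ι K j.1)

/-- An object `A` is nearly `κ`-presentable if its hom-functor `K(A,-)` preserves
special `κ`-directed colimits. -/
def NearlyPresentable (κ : Cardinal.{w}) (A : C) : Prop :=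
  ∀ {I : Type w} (K : I → C),
    Nonempty (IsColimit ((coyoneda.obj (op A)).mapCocone (subCocone κ K)))

/-- `C` has monomorphisms stable under special `κ`-directed colimits. -/
def MonosStableUnderSpecial (κ : Cardinal.{w}) : Prop :=
  ∀ {I : Type w} (K : I → C) {X : C} (f : (∐ K) ⟶ X),
    (∀ J : SmallSub κ I, Mono (subInj (C := C) κ K J ≫ f)) → Mono f

end

/-- A preordered set is `κ`-directed if every subset of cardinality `< κ` has
an upper bound. -/
def IsCardinalDirected (κ : Cardinal.{w}) (J : Type w) [Preorder J] : Prop :=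
  ∀ S : Set J, Cardinal.mk S < κ → ∃ j : J, ∀ s ∈ S, s ≤ j

/-- An object `A` is `κ`-presentable if its hom-functor preserves `κ`-directed colimits. -/
def PresentableObj (κ : Cardinal.{v}) (A : C) : Prop :=
  ∀ (J : Type v) [PartialOrder J], IsCardinalDirected κ J →
    Nonempty (PreservesColimitsOfShape J (coyoneda.obj (op A)))

/-- The restricted Yoneda functor `E_S : C ⥤ Set^{S^op}` for a full subcategory
on a set `S` of objects. -/
def restrictedYoneda (S : Set C) : C ⥤ ((ObjectProperty.FullSubcategory (· ∈ S))ᵒᵖ ⥤ Type v) :=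
  yoneda ⋙ (Functor.whiskeringLeft (ObjectProperty.FullSubcategory (· ∈ S))ᵒᵖ Cᵒᵖ (Type v)).obj
    (ObjectProperty.ι (· ∈ S)).op

/-- A set `S` of objects is a strong generator if it is small and the restricted
Yoneda functor `E_S : C ⥤ Set^{S^op}` is faithful and conservative. -/
structure IsStrongGenerator (S : Set C) : Prop where
  small : Small.{v} S
  faithful : (restrictedYoneda S).Faithful
  reflectsIsos : (restrictedYoneda S).ReflectsIsomorphisms

/-- A set `S` of objects is dense if the restricted Yoneda functor
`E_S : C ⥤ Set^{S^op}` is fully faithful. -/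
def IsDenseSub (S : Set C) : Prop :=
  (restrictedYoneda S).Full ∧ (restrictedYoneda S).Faithful

/-- A category is weakly co-wellpowered if every object has only a set of strong
quotients. -/
def WeaklyCoWellPowered (C : Type u) [Category.{v} C] : Prop :=
  ∀ X : C, ∃ (ι : Type v) (Z : ι → C) (p : ∀ i, X ⟶ Z i),
    (∀ i, StrongEpi (p i)) ∧
    ∀ (Y : C) (f : X ⟶ Y), StrongEpi f → ∃ (i : ι) (e : Z i ≅ Y), p i ≫ e.hom = f

/-- A cocomplete category is nearly locally `κ`-presentable if it is weakly
co-wellpowered and has a strong generator consisting of nearly `κ`-presentable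
objects. -/
structure IsNearlyLocallyPresentable (κ : Cardinal.{v}) (C : Type u) [Category.{v} C] : Prop where
  isRegular : κ.IsRegular
  cocomplete : HasColimitsOfSize.{v, v} C
  wcwp : WeaklyCoWellPowered C
  exists_gen : ∃ S : Set C, IsStrongGenerator S ∧
    ∀ A ∈ S, haveI := cocomplete; NearlyPresentable κ A

/-- A category is locally `κ`-presentable if it is cocomplete and has a strong
generator consisting of `κ`-presentable objects. -/
structure IsLocallyPresentable (κ : Cardinal.{v}) (C : Type u) [Category.{v} C] : Prop where
  isRegular : κ.IsRegular
  cocomplete : HasColimitsOfSize.{v, v} C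
  exists_gen : ∃ S : Set C, IsStrongGenerator S ∧ ∀ A ∈ S, PresentableObj κ A

/-- A category has regular factorizations if every morphism factors as a regular
epimorphism followed by a monomorphism. -/
def HasRegularFactorizations (C : Type u) [Category.{v} C] : Prop :=
  ∀ ⦃X Y : C⦄ (f : X ⟶ Y), ∃ (Z : C) (e : X ⟶ Z) (m : Z ⟶ Y),
    Nonempty (RegularEpi e) ∧ Mono m ∧ e ≫ m = f

/-- A category has (strong epi, mono)-factorizations if every morphism factors as
a strong epimorphism followed by a monomorphism. -/
def HasStrongEpiMonoFacts (C : Type u) [Category.{v} C] : Prop :=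
  ∀ ⦃X Y : C⦄ (f : X ⟶ Y), ∃ (Z : C) (e : X ⟶ Z) (m : Z ⟶ Y),
    StrongEpi e ∧ Mono m ∧ e ≫ m = f

/-- A class of objects `T` is closed under colimits if the vertex of any colimit
cocone on a small diagram with values in `T` belongs to `T`. -/
def ClosedUnderColimits (T : Set C) : Prop :=
  ∀ {J : Type v} [SmallCategory J] (F : J ⥤ C), (∀ j, F.obj j ∈ T) →
    ∀ (c : Cocone F), IsColimit c → c.pt ∈ T

end NLP

namespace NLP

variable {C : Type u} [Category.{v} C] [HasCoproducts.{v} C] {κ : Cardinal.{v}} {I : Type v}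

lemma SmallSub.union_lt (hκ : Cardinal.aleph0 ≤ κ) (J J' : SmallSub κ I) :
    Cardinal.mk ↥(J.1 ∪ J'.1) < κ :=
  (Cardinal.mk_union_le _ _).trans_lt (Cardinal.add_lt_of_lt hκ J.2 J'.2)

lemma subDiag_map_comp_subInj (K : I → C) {J J' : SmallSub κ I} (h : J ⟶ J') :
    (subDiag κ K).map h ≫ subInj κ K J' = subInj κ K J := by
  dsimp [subDiag, subInj]
  ext j
  simp

lemma subDiag_map_eq_of_comp_subInj_eq (K : I → C) {J J' J'' : SmallSub κ I}
    [Mono (subInj κ K J'')] (h : J ⟶ J'') (h' : J' ⟶ J'') {B : C}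
    (t : B ⟶ ∐ fun j : J.1 => K j) (t' : B ⟶ ∐ fun j : J'.1 => K j)
    (ht : t ≫ subInj κ K J = t' ≫ subInj κ K J') :
    t ≫ (subDiag κ K).map h = t' ≫ (subDiag κ K).map h' := by
  apply (cancel_mono (subInj κ K J'')).1
  -- `(subDiag κ K).obj J` is `∐ …` only up to unfolding, which defeats `rw` and `simp` here.
  calc (t ≫ (subDiag κ K).map h) ≫ subInj κ K J''
      = t ≫ (subDiag κ K).map h ≫ subInj κ K J'' := Category.assoc _ _ _
    _ = t ≫ subInj κ K J := congrArg (t ≫ ·) (subDiag_map_comp_subInj K h)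
    _ = t' ≫ subInj κ K J' := ht
    _ = t' ≫ (subDiag κ K).map h' ≫ subInj κ K J'' :=
      (congrArg (t' ≫ ·) (subDiag_map_comp_subInj K h')).symm
    _ = (t' ≫ (subDiag κ K).map h') ≫ subInj κ K J'' := (Category.assoc _ _ _).symm

/-- The subcoproduct injection becomes the injection of the summand `true` after composing
with `∐ K ⟶ (∐_{j ∈ J} K_j) ⨿ (∐_{j ∉ J} K_j)`. -/
lemma mono_subInj (hmono : ∀ {I : Type v} (K : I → C) (i : I), Mono (Sigma.ι K i))
    (K : I → C) (J : SmallSub κ I) : Mono (subInj κ K J) := by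
  classical
  let L : ULift.{v} Bool → C := fun b =>
    bif b.down then ∐ (fun j : J.1 => K j) else ∐ (fun j : (J.1ᶜ : Set I) => K j)
  let ψ : (∐ K) ⟶ ∐ L := Sigma.desc fun i =>
    if h : i ∈ J.1 then (Sigma.ι (fun j : J.1 => K j) ⟨i, h⟩ : _) ≫ Sigma.ι L ⟨true⟩
    else (Sigma.ι (fun j : (J.1ᶜ : Set I) => K j) ⟨i, h⟩ : _) ≫ Sigma.ι L ⟨false⟩
  have hψ : subInj κ K J ≫ ψ = Sigma.ι L ⟨true⟩ := by
    ext ⟨j, hj⟩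
    simp [subInj, ψ, dif_pos hj]
  have : Mono (subInj κ K J ≫ ψ) := hψ ▸ hmono L ⟨true⟩
  exact mono_of_mono _ ψ

lemma exists_subInj_factorization_of_nearlyPresentable {A : C} (hA : NearlyPresentable κ A)
    (K : I → C) (f : A ⟶ ∐ K) :
    ∃ (J : SmallSub κ I) (t : A ⟶ ∐ fun j : J.1 => K j), t ≫ subInj κ K J = f := by
  obtain ⟨hc⟩ := hA K
  exact Types.jointly_surjective _ hc f

lemma isColimit_coyoneda_mapCocone_subCocone (hκ : Cardinal.aleph0 ≤ κ) (K : I → C)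
    [∀ J : SmallSub κ I, Mono (subInj κ K J)] (B : C)
    (hfac : ∀ f : B ⟶ ∐ K,
      ∃ (J : SmallSub κ I) (t : B ⟶ ∐ fun j : J.1 => K j), t ≫ subInj κ K J = f) :
    Nonempty (IsColimit ((coyoneda.obj (op B)).mapCocone (subCocone κ K))) := by
  refine ⟨Types.FilteredColimit.isColimitOf _ _ (fun f => ?_) (fun J J' t t' h => ?_)⟩
  · obtain ⟨J, t, ht⟩ := hfac f
    exact ⟨J, t, ht.symm⟩
  · let J'' : SmallSub κ I := ⟨J.1 ∪ J'.1, SmallSub.union_lt hκ J J'⟩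
    refine ⟨J'', homOfLE Set.subset_union_left, homOfLE Set.subset_union_right, ?_⟩
    exact subDiag_map_eq_of_comp_subInj_eq K _ _ t t' h

end NLP

/-- In a category with coproducts in which all coproduct injections are
monomorphisms, a strong quotient of a nearly `κ`-presentable object is nearly
`κ`-presentable. -/
theorem NLP.stmt3 {C : Type u} [Category.{v} C] [HasCoproducts.{v} C]
    (hmono : ∀ {I : Type v} (K : I → C) (i : I), Mono (Sigma.ι K i))
    (κ : Cardinal.{v}) (hκ : κ.IsRegular)
    {A B : C} (g : A ⟶ B) (hg : StrongEpi g)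
    (hA : NearlyPresentable κ A) :
    NearlyPresentable κ B := by
  intro I K
  have := mono_subInj hmono (κ := κ) K
  refine isColimit_coyoneda_mapCocone_subCocone hκ.aleph0_le K B fun f => ?_
  obtain ⟨J, u, hu⟩ := exists_subInj_factorization_of_nearlyPresentable hA K (g ≫ f)
  let sq : CommSq u g (subInj κ K J) f := ⟨hu⟩
  exact ⟨J, sq.lift, sq.fac_right⟩
end

section
/- Every nearly locally presentable category with regular factorizations is bounded, i.e., it has a small dense full subcategory. -/
/-!
Let `G` be a strong generator of nearly `κ`-presentable objects and let `S` be `G` together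
with the coproducts of members of `G` indexed by subsets of a fixed set of size `κ`; `S` is
small. Given `η : E_S K ⟶ E_S K'`, let `p : ∐ G_i ⟶ K` be the canonical map from the coproduct
over all `G_i ⟶ K`, and `g : ∐ G_i ⟶ K'` apply `η` summandwise. Every `x : G_i ⟶ ∐ G_i`
factors through a subcoproduct with fewer than `κ` summands, which up to reindexing lies in
`S`; naturality of `η` there gives `x ≫ g = η (x ≫ p)`. Factor `p = e ≫ m` with `e` regular
epi and `m` mono. Every `G_i ⟶ K` factors through `m`, so `m` is invertible as `G` is a strong
generator; and `g` coequalizes the pair coequalized by `e`, as can be tested on `G`. Hence `g`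
descends to `f : K ⟶ K'` with `E_S f = η`.
-/

universe w v u u₁ u₂

open CategoryTheory CategoryTheory.Limits Opposite

namespace NLP

open Cardinal

variable {C : Type u} [Category.{v} C]

section RestrictedYoneda

variable {S : Set C} {K K' : C}

lemma restrictedYoneda_app_comp (η : (restrictedYoneda S).obj K ⟶ (restrictedYoneda S).obj K')
    {B B' : C} (hB : B ∈ S) (hB' : B' ∈ S) (φ : B ⟶ B') (g : B' ⟶ K) :
    η.app (op ⟨B, hB⟩) (φ ≫ g) = φ ≫ η.app (op ⟨B', hB'⟩) g :=
  types_congr_hom (η.naturality (ObjectProperty.homMk φ :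
    (⟨B, hB⟩ : ObjectProperty.FullSubcategory (· ∈ S)) ⟶ ⟨B', hB'⟩).op) g

lemma restrictedYoneda_map_eq {η : (restrictedYoneda S).obj K ⟶ (restrictedYoneda S).obj K'}
    {f : K ⟶ K'} (h : ∀ (B : C) (hB : B ∈ S) (g : B ⟶ K),
      g ≫ f = η.app (op ⟨B, hB⟩) g) :
    (restrictedYoneda S).map f = η := by
  ext B g
  exact h B.unop.obj B.unop.property g

lemma restrictedYoneda_faithful_of_subset {S₀ : Set C} (hS : S₀ ⊆ S)
    [(restrictedYoneda S₀).Faithful] : (restrictedYoneda S).Faithful where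
  map_injective {X Y} f g hfg := (restrictedYoneda S₀).map_injective <| by
    ext B x
    exact types_congr_hom (NatTrans.congr_app hfg (op ⟨B.unop.obj, hS B.unop.property⟩)) x

end RestrictedYoneda

lemma IsStrongGenerator.isIso_of_mono {S : Set C} (hS : IsStrongGenerator S) {Z K : C}
    (m : Z ⟶ K) [Mono m] (hm : ∀ B ∈ S, ∀ g : B ⟶ K, ∃ g' : B ⟶ Z, g' ≫ m = g) :
    IsIso m := by
  have := hS.reflectsIsos
  have : ∀ B, IsIso (((restrictedYoneda S).map m).app B) := fun B => by
    rw [isIso_iff_bijective]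
    exact ⟨fun _ _ h => (cancel_mono m).1 h, fun g => hm _ B.unop.property g⟩
  have := NatIso.isIso_of_isIso_app ((restrictedYoneda S).map m)
  exact isIso_of_reflects_iso m (restrictedYoneda S)

lemma exists_comp_eq_of_regularEpi {S : Set C} [(restrictedYoneda S).Faithful] {X Y Z : C}
    {e : X ⟶ Y} (he : RegularEpi e) (g : X ⟶ Z)
    (hg : ∀ B ∈ S, ∀ x y : B ⟶ X, x ≫ e = y ≫ e → x ≫ g = y ≫ g) :
    ∃ f : Y ⟶ Z, e ≫ f = g := by
  have hcoeq : he.left ≫ g = he.right ≫ g := (restrictedYoneda S).map_injective <| by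
    ext B (h : B.unop.obj ⟶ he.W)
    simpa [restrictedYoneda] using
      hg _ B.unop.property (h ≫ he.left) (h ≫ he.right) (by simp [he.w])
  exact ⟨Cofork.IsColimit.desc he.isColimit g hcoeq,
    Cofork.IsColimit.π_desc' he.isColimit g hcoeq⟩

lemma IsStrongGenerator.exists_comp_eq {S : Set C} (hS : IsStrongGenerator S)
    (hreg : HasRegularFactorizations C) {X K K' : C} (p : X ⟶ K) (g : X ⟶ K')
    (hp : ∀ B ∈ S, ∀ h : B ⟶ K, ∃ x : B ⟶ X, x ≫ p = h)
    (hg : ∀ B ∈ S, ∀ x y : B ⟶ X, x ≫ p = y ≫ p → x ≫ g = y ≫ g) :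
    ∃ f : K ⟶ K', p ≫ f = g := by
  obtain ⟨Z, e, m, ⟨he⟩, hm, rfl⟩ := hreg p
  have : IsIso m := hS.isIso_of_mono m fun B hB h => by
    obtain ⟨x, rfl⟩ := hp B hB h
    exact ⟨x ≫ e, Category.assoc _ _ _⟩
  have := hS.faithful
  obtain ⟨f, hf⟩ := exists_comp_eq_of_regularEpi he g fun B hB x y hxy =>
    hg B hB x y (by simp only [← Category.assoc, hxy])
  exact ⟨inv m ≫ f, by simpa using hf⟩

lemma exists_comp_sigmaDesc_eq_of_range_subset {I J P : Type*} (fam : I → C) (f : J → I)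
    (i : P → I) [HasCoproduct fam] [HasCoproduct (fam ∘ f)] [HasCoproduct (fam ∘ i)]
    (h : Set.range f ⊆ Set.range i) :
    ∃ w : ∐ (fam ∘ f) ⟶ ∐ (fam ∘ i),
      w ≫ Sigma.desc (fun p => Sigma.ι fam (i p)) =
        Sigma.desc (f := fam ∘ f) (fun j => Sigma.ι fam (f j)) := by
  choose s hs using fun j => h ⟨j, rfl⟩
  refine ⟨Sigma.desc fun j => eqToHom (congrArg fam (hs j).symm) ≫ Sigma.ι (fam ∘ i) (s j),
    Sigma.hom_ext _ _ fun j => ?_⟩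
  simpa using Sigma.eqToHom_comp_ι fam (hs j).symm

section NearlyPresentable

variable [HasCoproducts.{w} C] {κ : Cardinal.{w}}

lemma exists_comp_sigmaDesc_eq_subInj {I U : Type w} (hU : κ ≤ #U) (fam : I → C)
    (J : SmallSub κ I) :
    ∃ (P : Set U) (i : P → I) (w : (∐ fun j : J.1 => fam j) ⟶ ∐ (fam ∘ i)),
      w ≫ Sigma.desc (fun p => Sigma.ι fam (i p)) = subInj κ fam J := by
  obtain ⟨u⟩ := (Cardinal.le_def J.1 U).1 (J.2.le.trans hU)
  let i : Set.range u → I := Subtype.val ∘ (Equiv.ofInjective u u.injective).symm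
  refine ⟨Set.range u, i, exists_comp_sigmaDesc_eq_of_range_subset fam Subtype.val i ?_⟩
  rintro _ ⟨j, rfl⟩
  exact ⟨⟨u j, j, rfl⟩, by simp [i, Equiv.ofInjective_symm_apply]⟩

lemma NearlyPresentable.exists_comp_subInj_eq {A : C} (hA : NearlyPresentable κ A) {I : Type w}
    (fam : I → C) (x : A ⟶ ∐ fam) :
    ∃ (J : SmallSub κ I) (y : A ⟶ ∐ fun j : J.1 => fam j), y ≫ subInj κ fam J = x := by
  obtain ⟨hc⟩ := hA fam
  exact Types.jointly_surjective _ hc x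

lemma NearlyPresentable.exists_comp_sigmaDesc_eq {A : C} (hA : NearlyPresentable κ A)
    {I U : Type w} (hU : κ ≤ #U) (fam : I → C) (x : A ⟶ ∐ fam) :
    ∃ (P : Set U) (i : P → I) (y : A ⟶ ∐ (fam ∘ i)),
      y ≫ Sigma.desc (fun p => Sigma.ι fam (i p)) = x := by
  obtain ⟨J, y, rfl⟩ := hA.exists_comp_subInj_eq fam x
  obtain ⟨P, i, w, hw⟩ := exists_comp_sigmaDesc_eq_subInj hU fam J
  exact ⟨P, i, y ≫ w, by rw [Category.assoc, hw]⟩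

end NearlyPresentable

section Dense

variable {K K' : C}

lemma comp_sigmaDesc_app_eq {S : Set C}
    (η : (restrictedYoneda S).obj K ⟶ (restrictedYoneda S).obj K') {I P : Type*} (fam : I → C)
    [HasCoproduct fam] (hfam : ∀ a, fam a ∈ S) (φ : ∀ a, fam a ⟶ K) (i : P → I)
    [HasCoproduct (fam ∘ i)] (hT : ∐ (fam ∘ i) ∈ S) {B : C} (hB : B ∈ S)
    (y : B ⟶ ∐ (fam ∘ i)) :
    (y ≫ Sigma.desc fun p => Sigma.ι fam (i p)) ≫
        Sigma.desc (fun a => (η.app (op ⟨fam a, hfam a⟩) (φ a) : fam a ⟶ K')) =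
      η.app (op ⟨B, hB⟩)
        ((y ≫ Sigma.desc fun p => Sigma.ι fam (i p)) ≫ Sigma.desc φ) := by
  rw [Category.assoc, Category.assoc, restrictedYoneda_app_comp η hB hT]
  congr 1
  refine Sigma.hom_ext _ _ fun p => ?_
  rw [← restrictedYoneda_app_comp η (hfam (i p)) hT]
  simp only [Sigma.ι_desc_assoc, Sigma.ι_desc]
  exact Sigma.ι_desc _ _

variable [HasCoproducts.{v} C]

/-- The index sets are the subsets of one type `U`, so that this set of objects is small. -/
def sigmaObjs {ι : Type v} (G : ι → C) (U : Type v) : Set C :=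
  Set.range fun x : Σ P : Set U, P → ι => ∐ fun p => G (x.2 p)

lemma sigma_mem_sigmaObjs {ι U : Type v} (G : ι → C) {P : Set U} (c : P → ι) :
    (∐ fun p => G (c p)) ∈ sigmaObjs G U :=
  ⟨⟨P, c⟩, rfl⟩

lemma apply_mem_range_union_sigmaObjs {ι : Type v} (G : ι → C) (U : Type v) (i : ι) :
    G i ∈ Set.range G ∪ sigmaObjs G U :=
  Set.mem_union_left _ (Set.mem_range_self i)

instance {ι U : Type v} (G : ι → C) : Small.{v} (sigmaObjs G U) :=
  small_range _

lemma restrictedYoneda_map_eq_of_range {ι U : Type v} {G : ι → C}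
    {η : (restrictedYoneda (Set.range G ∪ sigmaObjs G U)).obj K ⟶
      (restrictedYoneda (Set.range G ∪ sigmaObjs G U)).obj K'} {f : K ⟶ K'}
    (hf : ∀ i (g : G i ⟶ K),
      g ≫ f = η.app (op ⟨G i, apply_mem_range_union_sigmaObjs G U i⟩) g) :
    (restrictedYoneda _).map f = η := by
  refine restrictedYoneda_map_eq fun B hB g => ?_
  rcases id hB with ⟨i, rfl⟩ | ⟨x, rfl⟩
  · exact hf i g
  · refine Sigma.hom_ext _ _ fun p => ?_
    rw [← Category.assoc, hf, ← restrictedYoneda_app_comp η _ hB]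

theorem isDenseSub_range_union_sigmaObjs (hreg : HasRegularFactorizations C)
    {κ : Cardinal.{v}} {ι U : Type v} (hU : κ ≤ #U) {G : ι → C}
    (hG : IsStrongGenerator (Set.range G)) (hGκ : ∀ i, NearlyPresentable κ (G i)) :
    IsDenseSub (Set.range G ∪ sigmaObjs G U) := by
  have := hG.faithful
  refine ⟨⟨fun {K K'} η => ?_⟩, restrictedYoneda_faithful_of_subset Set.subset_union_left⟩
  have hGS := apply_mem_range_union_sigmaObjs G U
  let fam : (Σ i, G i ⟶ K) → C := fun a => G a.1
  let p : ∐ fam ⟶ K := Sigma.desc Sigma.snd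
  let g : ∐ fam ⟶ K' := Sigma.desc fun a => η.app (op ⟨G a.1, hGS a.1⟩) a.2
  -- `x` factors through a subcoproduct with fewer than `κ` summands, where `η` is natural
  have hcompat : ∀ i (x : G i ⟶ ∐ fam), x ≫ g = η.app (op ⟨G i, hGS i⟩) (x ≫ p) := by
    intro i x
    obtain ⟨P, c, y, rfl⟩ := NearlyPresentable.exists_comp_sigmaDesc_eq (hGκ i) hU fam x
    exact comp_sigmaDesc_app_eq η fam (fun a => hGS a.1) Sigma.snd c
      (Or.inr (sigma_mem_sigmaObjs G fun q => (c q).1)) (hGS i) y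
  obtain ⟨f, hf⟩ := hG.exists_comp_eq hreg p g
    (by rintro _ ⟨i, rfl⟩ h; exact ⟨Sigma.ι fam ⟨i, h⟩, Sigma.ι_desc _ _⟩)
    (by rintro _ ⟨i, rfl⟩ x y hxy; rw [hcompat, hcompat, hxy])
  refine ⟨f, restrictedYoneda_map_eq_of_range fun i h => ?_⟩
  have hι : Sigma.ι fam ⟨i, h⟩ ≫ p = h := Sigma.ι_desc _ _
  nth_rewrite 1 [← hι]
  rw [Category.assoc, hf]
  exact Sigma.ι_desc _ _

end Dense

end NLP

/-- Every nearly locally presentable category with regular factorizations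
is bounded, i.e. it has a small dense full subcategory. -/
theorem NLP.stmt7 {C : Type u} [Category.{v} C]
    (h : ∃ κ : Cardinal.{v}, IsNearlyLocallyPresentable κ C)
    (hreg : HasRegularFactorizations C) :
    ∃ S : Set C, Small.{v} S ∧ IsDenseSub S := by
  obtain ⟨κ, -, hcolim, -, S₀, hS₀, hS₀κ⟩ := h
  have := hS₀.small
  let G : Shrink.{v} S₀ → C := fun b => ((equivShrink S₀).symm b).1
  have hG : Set.range G = S₀ :=
    ((equivShrink S₀).symm.surjective.range_comp _).trans Subtype.range_coe
  refine ⟨Set.range G ∪ NLP.sigmaObjs G κ.out, inferInstance, ?_⟩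
  exact NLP.isDenseSub_range_union_sigmaObjs hreg (Cardinal.mk_out κ).ge (by rwa [hG])
    fun b => hS₀κ _ ((equivShrink S₀).symm b).2
end

section
/- Every nearly locally presentable category is complete, i.e., has all small limits. -/
universe w v u u₁ u₂

open CategoryTheory CategoryTheory.Limits Opposite

/-!
In a cocomplete, weakly co-wellpowered category, every family `c j : X ⟶ Y j` factors through a
largest strong quotient of `X`: the wide pushout of the set of strong quotients of `X` through
which all `c j` factor. Its legs are jointly monic, since a coequalizer of two maps into it would
give a larger such quotient.

For a small diagram `F`, apply this to the coproduct `W` of all cones over `F` with vertex in the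
strong generator. The resulting cone is a limit: factorisations through it are unique by joint
monicity, and they exist because every vertex `T` is a strong quotient of a coproduct of
generators, whose induced cone factors through `W`; pushing that strong epi out along the map
into `W` gives a strong quotient of `W` to which the family extends.
-/

namespace NLP

variable {C : Type u} [Category.{v} C]

lemma strongEpi_pushout_inl {A B X : C} (r : A ⟶ X) (e : A ⟶ B) [HasPushout r e]
    [StrongEpi e] : StrongEpi (pushout.inl r e) where
  epi := (MorphismProperty.epimorphisms C).of_isPushout (IsPushout.of_hasPushout r e)
    (MorphismProperty.epimorphisms.infer_property e)
  llp := fun _ _ z _ => (MorphismProperty.monomorphisms C).llp.of_isPushout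
    (IsPushout.of_hasPushout r e) (fun _ _ _ _ => StrongEpi.llp _) z (.infer_property z)

lemma strongEpi_widePushout_head {ι : Type w} {B : C} {Z : ι → C} (p : ∀ i, B ⟶ Z i)
    [HasWidePushout B Z p] [∀ i, StrongEpi (p i)] : StrongEpi (WidePushout.head p) where
  epi := ⟨fun a b hab => WidePushout.hom_ext _ _ _ (fun i => by
    rw [← cancel_epi (p i), WidePushout.arrow_ι_assoc, WidePushout.arrow_ι_assoc, hab]) hab⟩
  llp := fun M Y z _ => ⟨fun {f g} sq => by
    have (i : ι) : CommSq f (p i) z (WidePushout.ι p i ≫ g) :=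
      ⟨by rw [sq.w, WidePushout.arrow_ι_assoc]⟩
    exact ⟨⟨WidePushout.desc f (fun i => (this i).lift) (fun i => (this i).fac_left),
      WidePushout.head_desc .., WidePushout.hom_ext _ _ _
        (fun i => by rw [WidePushout.ι_desc_assoc, (this i).fac_right])
        (by rw [WidePushout.head_desc_assoc, sq.w])⟩⟩⟩

lemma strongEpi_of_extremalEpi [HasStrongEpiMonoFactorisations C] {X Y : C} (f : X ⟶ Y)
    [ExtremalEpi f] : StrongEpi f := by
  obtain ⟨F⟩ := HasStrongEpiMonoFactorisations.has_fac f
  have := ExtremalEpi.isIso f F.e F.m F.fac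
  rw [← F.fac]
  infer_instance

structure LargestStrongQuotient {J : Type w} {X : C} {Y : J → C} (c : ∀ j, X ⟶ Y j) where
  Q : C
  q : X ⟶ Q
  [strongEpi : StrongEpi q]
  z : ∀ j, Q ⟶ Y j
  fac : ∀ j, q ≫ z j = c j
  maximal : ∀ {Z : C} (e : X ⟶ Z) [StrongEpi e] (d : ∀ j, Z ⟶ Y j),
    (∀ j, e ≫ d j = c j) → ∃ k : Z ⟶ Q, e ≫ k = q

attribute [instance] LargestStrongQuotient.strongEpi

namespace LargestStrongQuotient

variable {J : Type w} {X : C} {Y : J → C} {c : ∀ j, X ⟶ Y j}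

theorem nonempty [HasWidePushouts.{v} C] (hw : WeaklyCoWellPowered C) (c : ∀ j, X ⟶ Y j) :
    Nonempty (LargestStrongQuotient c) := by
  obtain ⟨ι, Z, p, hp, hrep⟩ := hw X
  let σ := {i : ι // ∃ d : ∀ j, Z i ⟶ Y j, ∀ j, p i ≫ d j = c j}
  let p' (i : σ) : X ⟶ Z i.1 := p i.1
  have (i : σ) : StrongEpi (p' i) := hp i.1
  have := strongEpi_widePushout_head p'
  choose d hd using fun i : σ => i.2
  refine ⟨⟨widePushout X (fun i : σ => Z i.1) p', WidePushout.head p',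
    fun j => WidePushout.desc (c j) (fun i => d i j) (fun i => hd i j),
    fun j => WidePushout.head_desc .., fun {W} e _ d' hd' => ?_⟩⟩
  obtain ⟨i, φ, hφ⟩ := hrep W e inferInstance
  have hpi : e ≫ φ.inv = p i := by rw [← hφ, Category.assoc, Iso.hom_inv_id, Category.comp_id]
  refine ⟨φ.inv ≫ WidePushout.ι p' ⟨i, fun j => φ.hom ≫ d' j, fun j => ?_⟩, ?_⟩
  · rw [reassoc_of% hφ, hd']
  · rw [reassoc_of% hpi]
    exact WidePushout.arrow_ι p' ⟨i, _⟩

theorem hom_ext [HasCoequalizers C] (L : LargestStrongQuotient c) {T : C} {u₁ u₂ : T ⟶ L.Q}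
    (h : ∀ j, u₁ ≫ L.z j = u₂ ≫ L.z j) : u₁ = u₂ := by
  let γ := coequalizer.π u₁ u₂
  obtain ⟨k, hk⟩ := L.maximal (L.q ≫ γ) (fun j => coequalizer.desc (L.z j) (h j))
    (fun j => by rw [Category.assoc, coequalizer.π_desc, L.fac])
  have : γ ≫ k = 𝟙 _ := by rw [← cancel_epi L.q, ← Category.assoc, hk, Category.comp_id]
  have : IsSplitMono γ := IsSplitMono.mk' ⟨k, this⟩
  have := isIso_of_epi_of_isSplitMono γ
  exact (cancel_mono γ).1 (coequalizer.condition u₁ u₂)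

theorem exists_lift [HasPushouts C] (L : LargestStrongQuotient c) {T E : C}
    (d : ∀ j, T ⟶ Y j) (p : E ⟶ T) [StrongEpi p] (r : E ⟶ X)
    (hr : ∀ j, r ≫ c j = p ≫ d j) : ∃ u : T ⟶ L.Q, ∀ j, u ≫ L.z j = d j := by
  have := strongEpi_pushout_inl r p
  let d' (j : J) : pushout r p ⟶ Y j := pushout.desc (c j) (d j) (hr j)
  obtain ⟨k, hk⟩ := L.maximal (pushout.inl r p) d' (fun j => pushout.inl_desc ..)
  refine ⟨pushout.inr r p ≫ k, fun j => ?_⟩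
  have : k ≫ L.z j = d' j := by
    rw [← cancel_epi (pushout.inl r p), reassoc_of% hk, L.fac, pushout.inl_desc]
  rw [Category.assoc, this, pushout.inr_desc]

end LargestStrongQuotient

theorem hasStrongEpiMonoFactorisations_of_weaklyCoWellPowered [HasWidePushouts.{v} C]
    [HasCoequalizers C] (hw : WeaklyCoWellPowered C) : HasStrongEpiMonoFactorisations C :=
  .mk fun f =>
    let L := (LargestStrongQuotient.nonempty hw fun _ : Unit => f).some
    { I := L.Q
      m := L.z ()
      m_mono := ⟨fun _ _ h => L.hom_ext fun _ => h⟩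
      e := L.q
      fac := L.fac () }

theorem IsStrongGenerator.toObjectProperty {S : Set C} (hS : IsStrongGenerator S) :
    ObjectProperty.IsStrongGenerator (· ∈ S) := by
  have := hS.faithful
  have := hS.reflectsIsos
  rw [ObjectProperty.isStrongGenerator_iff]
  refine ⟨fun X Y f g h => (restrictedYoneda S).map_injective ?_, fun X Y i _ hi => ?_⟩
  · ext A a
    exact h _ A.unop.property a
  · have : IsIso ((restrictedYoneda S).map i) := by
      rw [NatTrans.isIso_iff_isIso_app]
      intro A
      rw [isIso_iff_bijective]
      exact ⟨fun a b hab => (cancel_mono i).1 hab, hi _ A.unop.property⟩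
    exact isIso_of_reflects_iso i (restrictedYoneda S)

section Limits

variable {J : Type v} [SmallCategory J] {F : J ⥤ C}

variable (F) in
theorem exists_cone_factoring_cones_with_pt [HasCoproducts.{v} C] (P : ObjectProperty C)
    [ObjectProperty.Small.{v} P] :
    ∃ W : Cone F, ∀ c : Cone F, P c.pt →
      ∃ r : c.pt ⟶ W.pt, ∀ j, r ≫ W.π.app j = c.π.app j := by
  let I := Σ G : Subtype P, ((Functor.const J).obj G.1 ⟶ F)
  have := hasCoproductsOfShape_of_small.{v} C I
  refine ⟨⟨∐ fun a : I => a.1.1,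
      { app := fun j => Sigma.desc fun a => a.2.app j, naturality := ?_ }⟩,
    fun c hc => ⟨Sigma.ι (fun a : I => a.1.1) ⟨⟨c.pt, hc⟩, c.π⟩, fun _ => Sigma.ι_desc ..⟩⟩
  intro j j' f
  refine Sigma.hom_ext _ _ fun a => ?_
  simp [← a.2.naturality f]

theorem exists_strongEpi_cover_factoring_through [HasColimitsOfSize.{v, v} C]
    [HasStrongEpiMonoFactorisations C] {P : ObjectProperty C} [ObjectProperty.Small.{v} P]
    (hP : P.IsStrongGenerator) {W : Cone F}
    (hW : ∀ c : Cone F, P c.pt → ∃ r : c.pt ⟶ W.pt, ∀ j, r ≫ W.π.app j = c.π.app j)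
    (c : Cone F) :
    ∃ (E : C) (p : E ⟶ c.pt) (_ : StrongEpi p) (r : E ⟶ W.pt),
      ∀ j, r ≫ W.π.app j = p ≫ c.π.app j := by
  obtain ⟨ι, s, hs, b, hb, p, _⟩ :=
    (ObjectProperty.isStrongGenerator_iff_exists_extremalEpi.{v}).1 hP c.pt
  choose r hr using fun i => hW (c.extend (b.inj i ≫ p)) (hs i)
  refine ⟨b.pt, p, strongEpi_of_extremalEpi p, Cofan.IsColimit.desc hb r,
    fun j => Cofan.IsColimit.hom_ext hb _ _ fun i => ?_⟩
  simp [hr]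

namespace LargestStrongQuotient

def cone {W : Cone F} (L : LargestStrongQuotient W.π.app) : Cone F where
  pt := L.Q
  π :=
    { app := L.z
      naturality := fun j j' f => by
        rw [← cancel_epi L.q]
        simp [reassoc_of% L.fac, L.fac] }

noncomputable def isLimitCone [HasCoequalizers C] [HasPushouts C] {W : Cone F}
    (L : LargestStrongQuotient W.π.app)
    (hW : ∀ c : Cone F, ∃ (E : C) (p : E ⟶ c.pt) (_ : StrongEpi p) (r : E ⟶ W.pt),
      ∀ j, r ≫ W.π.app j = p ≫ c.π.app j) :
    IsLimit L.cone :=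
  IsLimit.ofExistsUnique fun c => by
    obtain ⟨E, p, _, r, hr⟩ := hW c
    obtain ⟨u, hu⟩ := L.exists_lift c.π.app p r hr
    exact ⟨u, hu, fun u' hu' => L.hom_ext fun j => (hu' j).trans (hu j).symm⟩

end LargestStrongQuotient

theorem hasLimitsOfSize_of_weaklyCoWellPowered [HasColimitsOfSize.{v, v} C]
    (hw : WeaklyCoWellPowered C) {P : ObjectProperty C} [ObjectProperty.Small.{v} P]
    (hP : P.IsStrongGenerator) : HasLimitsOfSize.{v, v} C := by
  have := hasStrongEpiMonoFactorisations_of_weaklyCoWellPowered hw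
  refine ⟨fun J _ => ⟨fun F => ?_⟩⟩
  obtain ⟨W, hW⟩ := exists_cone_factoring_cones_with_pt F P
  obtain ⟨L⟩ := LargestStrongQuotient.nonempty hw W.π.app
  exact ⟨⟨L.cone, L.isLimitCone (exists_strongEpi_cover_factoring_through hP hW)⟩⟩

end Limits

end NLP

/-- Every nearly locally presentable category is complete. -/
theorem NLP.stmt11 {C : Type u} [Category.{v} C]
    (h : ∃ κ : Cardinal.{v}, IsNearlyLocallyPresentable κ C) :
    HasLimitsOfSize.{v, v} C := by
  obtain ⟨_, hC⟩ := h
  obtain ⟨S, hS, -⟩ := hC.exists_gen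
  have := hC.cocomplete
  have : ObjectProperty.Small.{v} (· ∈ S) := hS.small
  exact NLP.hasLimitsOfSize_of_weaklyCoWellPowered hC.wcwp hS.toObjectProperty
end

section
/- Let K be a nearly locally λ-presentable category and C a small category. Then the functor category K^C is nearly locally λ-presentable. -/
universe w v u u₁ u₂

open CategoryTheory CategoryTheory.Limits Opposite

/-!
Being cocomplete and weakly co-wellpowered, `K` has (strong epi, mono)-factorizations: factor
`f : X ⟶ Y` through the wide pushout of the representative strong quotients of `X` through which
`f` factors. The induced map to `Y` is mono, since the coequalizer of two maps into it composes
to a further such quotient and therefore splits. Pointwise images then show that strong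
epimorphisms of `K^𝒞` are pointwise strong, so a strong quotient of `X` in `K^𝒞` is determined up
to isomorphism by a representative strong quotient of each `X c`.

For a strong generator `S` of `K`, the functors `∐_{𝒞(c,-)} A` with `A ∈ S`, left adjoint to
evaluation at `c`, form a strong generator of `K^𝒞`. Their hom-functors are `K(A, (-)(c))`, and
evaluation preserves coproducts, so they are nearly presentable as soon as `A` is.
-/

namespace NLP

section StrongEpiMono

variable {C : Type u} [Category.{v} C]

theorem WidePushout.strongEpi_head {ι : Type w} {X : C} {Z : ι → C} (p : ∀ i, X ⟶ Z i)
    [∀ i, StrongEpi (p i)] [HasWidePushout X Z p] : StrongEpi (WidePushout.head p) := by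
  have : Epi (WidePushout.head p) := ⟨fun g₁ g₂ hg => WidePushout.hom_ext p g₁ g₂
    (fun i => (cancel_epi (p i)).1 (by simpa only [WidePushout.arrow_ι_assoc] using hg)) hg⟩
  refine StrongEpi.mk' fun A B z _ u v sq => ?_
  have sq_i (i : ι) : CommSq u (p i) z (WidePushout.ι p i ≫ v) :=
    ⟨by rw [sq.w, WidePushout.arrow_ι_assoc]⟩
  refine ⟨⟨⟨WidePushout.desc u (fun i => (sq_i i).lift) (fun i => (sq_i i).fac_left), ?_, ?_⟩⟩⟩
  · exact WidePushout.head_desc ..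
  · refine WidePushout.hom_ext p _ _ (fun i => ?_) ?_
    · rw [WidePushout.ι_desc_assoc, (sq_i i).fac_right]
    · rw [WidePushout.head_desc_assoc, sq.w]

theorem WeaklyCoWellPowered.hasStrongEpiMonoFactorisations [HasColimitsOfSize.{v, v} C]
    (hC : WeaklyCoWellPowered C) : HasStrongEpiMonoFactorisations C := by
  refine ⟨fun {X Y} f => ?_⟩
  obtain ⟨ι, Z, p, hp, hcover⟩ := hC X
  let D := {i : ι // ∃ g : Z i ⟶ Y, p i ≫ g = f}
  let pD (d : D) : X ⟶ Z d.1 := p d.1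
  have : ∀ d, StrongEpi (pD d) := fun d => hp d.1
  let e := WidePushout.head pD
  let m : widePushout X _ pD ⟶ Y :=
    WidePushout.desc f (fun d => d.2.choose) (fun d => d.2.choose_spec)
  have : StrongEpi e := WidePushout.strongEpi_head pD
  have : Mono m := ⟨fun {T} u v huv => by
    let q := coequalizer.π u v
    obtain ⟨i, iso, hi⟩ := hcover _ (e ≫ q) inferInstance
    let d : D := ⟨i, iso.hom ≫ coequalizer.desc m huv, by
      rw [reassoc_of% hi, coequalizer.π_desc, WidePushout.head_desc]⟩
    have hq : q ≫ iso.inv ≫ WidePushout.ι pD d = 𝟙 _ := (cancel_epi e).1 (by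
      rw [← Category.assoc e, ← hi, Category.assoc, iso.hom_inv_id_assoc, WidePushout.arrow_ι pD d,
        Category.comp_id])
    have : IsSplitMono q := .mk' ⟨_, hq⟩
    exact (cancel_mono q).1 (coequalizer.condition u v)⟩
  exact ⟨{ I := _, m := m, e := e, fac := WidePushout.head_desc .. }⟩

end StrongEpiMono

section FunctorCategory

variable {𝒞 : Type*} [Category 𝒞] {K : Type*} [Category K]

section PointwiseImage

variable [HasStrongEpiMonoFactorisations K] {X Y : 𝒞 ⥤ K} (f : X ⟶ Y)

noncomputable def pointwiseImage : 𝒞 ⥤ K where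
  obj c := image (f.app c)
  map φ := image.map (Arrow.homMk' (X.map φ) (Y.map φ) (f.naturality φ))
  map_id c := (cancel_mono (image.ι _)).1 (by simp [image.map_homMk'_ι])
  map_comp φ ψ := by
    rw [← image.map_comp]
    congr 1
    ext <;> simp

noncomputable def factorThruPointwiseImage : X ⟶ pointwiseImage f where
  app c := factorThruImage (f.app c)
  naturality _ _ φ := (image.factor_map (Arrow.homMk' _ _ (f.naturality φ))).symm

noncomputable def pointwiseImage.ι : pointwiseImage f ⟶ Y where
  app c := image.ι (f.app c)
  naturality _ _ φ := image.map_ι (Arrow.homMk' _ _ (f.naturality φ))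

theorem factorThruPointwiseImage_comp_ι : factorThruPointwiseImage f ≫ pointwiseImage.ι f = f := by
  ext c
  exact image.fac (f.app c)

theorem NatTrans.strongEpi_app [StrongEpi f] (c : 𝒞) : StrongEpi (f.app c) := by
  have : ∀ c, Mono ((pointwiseImage.ι f).app c) := fun c => inferInstanceAs (Mono (image.ι _))
  have : Mono (pointwiseImage.ι f) := NatTrans.mono_of_mono_app _
  have : StrongEpi (factorThruPointwiseImage f ≫ pointwiseImage.ι f) := by
    rwa [factorThruPointwiseImage_comp_ι]
  have : StrongEpi (pointwiseImage.ι f) := strongEpi_of_strongEpi (factorThruPointwiseImage f) _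
  have : IsIso (pointwiseImage.ι f) := isIso_of_mono_of_strongEpi _
  have : StrongEpi ((factorThruPointwiseImage f).app c) :=
    inferInstanceAs (StrongEpi (factorThruImage (f.app c)))
  have := strongEpi_comp ((factorThruPointwiseImage f).app c) ((pointwiseImage.ι f).app c)
  rwa [← NatTrans.comp_app, factorThruPointwiseImage_comp_ι] at this

end PointwiseImage

theorem exists_iso_of_epi_app {X Y Y' : 𝒞 ⥤ K} (f : X ⟶ Y) (g : X ⟶ Y') [∀ c, Epi (f.app c)]
    (e : ∀ c, Y.obj c ≅ Y'.obj c) (he : ∀ c, f.app c ≫ (e c).hom = g.app c) :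
    ∃ E : Y ≅ Y', f ≫ E.hom = g := by
  refine ⟨NatIso.ofComponents e fun {c c'} φ => (cancel_epi (f.app c)).1 ?_, by ext c; exact he c⟩
  rw [← NatTrans.naturality_assoc, he, g.naturality, ← he, Category.assoc]

end FunctorCategory

theorem WeaklyCoWellPowered.functorCategory {𝒞 : Type v} [SmallCategory 𝒞] {K : Type u}
    [Category.{v} K] [HasStrongEpiMonoFactorisations K] (hK : WeaklyCoWellPowered K) :
    WeaklyCoWellPowered (𝒞 ⥤ K) := by
  intro X
  choose ι Z p _ hcover using fun c => hK (X.obj c)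
  let Q := {idx : ∀ c, ι c // ∃ (Y : 𝒞 ⥤ K) (f : X ⟶ Y), StrongEpi f ∧
    ∀ c, ∃ e : Z c (idx c) ≅ Y.obj c, p c (idx c) ≫ e.hom = f.app c}
  choose Y f hf e he using fun q : Q => q.2
  refine ⟨Q, Y, f, hf, fun Y' g hg => ?_⟩
  choose idx e' he' using fun c => hcover c (Y'.obj c) (g.app c) (NatTrans.strongEpi_app g c)
  let q : Q := ⟨idx, Y', g, hg, fun c => ⟨e' c, he' c⟩⟩
  have := NatTrans.strongEpi_app (f q)
  refine ⟨q, exists_iso_of_epi_app (f q) g (fun c => (e q c).symm ≪≫ e' c) fun c => ?_⟩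
  rw [Iso.trans_hom, Iso.symm_hom, ← he q c, Category.assoc, Iso.hom_inv_id_assoc, he' c]

section NearlyPresentable

variable {C : Type u} [Category.{v} C] {D : Type u₁} [Category.{v} D]
  [HasCoproducts.{w} C] [HasCoproducts.{w} D]
  (R : C ⥤ D) [∀ J : Type w, PreservesColimitsOfShape (Discrete J) R]
  (κ : Cardinal.{w}) {I : Type w} (K : I → C)

noncomputable def subDiagCompIso : subDiag κ (fun i => R.obj (K i)) ≅ subDiag κ K ⋙ R :=
  NatIso.ofComponents (fun J => (PreservesCoproduct.iso R _).symm) fun {J J'} f => by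
    dsimp only [subDiag, Functor.comp_obj, Functor.comp_map]
    ext j
    simp

noncomputable def subCoconeIsoMapCocone :
    subCocone κ (fun i => R.obj (K i)) ≅
      (Cocone.precompose (subDiagCompIso R κ K).hom).obj (R.mapCocone (subCocone κ K)) :=
  Cocone.ext (PreservesCoproduct.iso R K).symm fun J => by
    refine Sigma.hom_ext _ _ fun j => ?_
    have happ : (subDiagCompIso R κ K).hom.app J = sigmaComparison R _ := rfl
    simp [happ, subCocone, subDiag]

variable {R κ} in
theorem NearlyPresentable.leftAdjoint_obj {L : D ⥤ C} (adj : L ⊣ R) {A : D}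
    (hA : NearlyPresentable κ A) : NearlyPresentable κ (L.obj A) := by
  intro I G
  obtain ⟨hc⟩ := hA fun i => R.obj (G i)
  let coyA := coyoneda.obj (op A)
  have h₁ : IsColimit (coyA.mapCocone
      ((Cocone.precompose (subDiagCompIso R κ G).hom).obj (R.mapCocone (subCocone κ G)))) :=
    hc.ofIsoColimit ((Cocone.functoriality _ coyA).mapIso (subCoconeIsoMapCocone R κ G))
  have h₂ : IsColimit (coyA.mapCocone (R.mapCocone (subCocone κ G))) :=
    IsColimit.precomposeHomEquiv (Functor.isoWhiskerRight (subDiagCompIso R κ G) coyA) _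
      (h₁.ofIsoColimit (Functor.mapCoconePrecompose ..))
  exact ⟨IsColimit.mapCoconeEquiv (adj.compCoyonedaIso.app (op A)).symm
    (h₂.ofIsoColimit (Functor.mapCoconeMapCocone _))⟩

end NearlyPresentable

section StrongGenerator

variable {C : Type u} [Category.{v} C] {S : Set C}

theorem IsStrongGenerator.hom_ext (hS : IsStrongGenerator S) {X Y : C} {f g : X ⟶ Y}
    (h : ∀ A ∈ S, ∀ u : A ⟶ X, u ≫ f = u ≫ g) : f = g := by
  have := hS.faithful
  exact (restrictedYoneda S).map_injective (by ext W u; exact h _ W.unop.property u)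

theorem IsStrongGenerator.isIso_of_bijective (hS : IsStrongGenerator S) {X Y : C} (f : X ⟶ Y)
    (h : ∀ A ∈ S, Function.Bijective fun u : A ⟶ X => u ≫ f) : IsIso f := by
  have := hS.reflectsIsos
  have : ∀ W, IsIso (((restrictedYoneda S).map f).app W) := fun W =>
    (isIso_iff_bijective _).2 (h _ W.unop.property)
  have : IsIso ((restrictedYoneda S).map f) := NatIso.isIso_of_isIso_app _
  exact isIso_of_reflects_iso f (restrictedYoneda S)

theorem IsStrongGenerator.mk' [Small.{v} S]
    (hom_ext : ∀ {X Y : C} (f g : X ⟶ Y), (∀ A ∈ S, ∀ u : A ⟶ X, u ≫ f = u ≫ g) → f = g)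
    (isIso : ∀ {X Y : C} (f : X ⟶ Y), (∀ A ∈ S, Function.Bijective fun u : A ⟶ X => u ≫ f) →
      IsIso f) :
    IsStrongGenerator S where
  small := inferInstance
  faithful := ⟨fun {_ _ f g} hfg => hom_ext f g fun A hA u =>
    congrFun (congrArg (fun α => NatTrans.app α (op ⟨A, hA⟩)) hfg) u⟩
  reflectsIsos := ⟨fun f _ => isIso f fun A hA =>
    (isIso_iff_bijective _).1 (NatIso.isIso_app_of_isIso ((restrictedYoneda S).map f) (op ⟨A, hA⟩))⟩

end StrongGenerator

theorem IsStrongGenerator.range_evaluationLeftAdjoint {𝒞 : Type v} [SmallCategory 𝒞]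
    {K : Type u} [Category.{v} K] [∀ a b : 𝒞, HasCoproductsOfShape (a ⟶ b) K] {S : Set K}
    (hS : IsStrongGenerator S) :
    IsStrongGenerator (Set.range fun x : 𝒞 × S => (evaluationLeftAdjoint K x.1).obj x.2.1) := by
  have := hS.small
  have homEquiv_symm_comp (c : 𝒞) (A : K) {G H : 𝒞 ⥤ K} (u : A ⟶ G.obj c) (φ : G ⟶ H) :
      ((evaluationAdjunctionRight K c).homEquiv A G).symm u ≫ φ =
        ((evaluationAdjunctionRight K c).homEquiv A H).symm (u ≫ φ.app c) :=
    ((evaluationAdjunctionRight K c).homEquiv_naturality_right_symm u φ).symm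
  refine .mk' (fun φ ψ h => ?_) (fun {G H} φ h => ?_)
  · ext c
    refine hS.hom_ext fun A hA u => ((evaluationAdjunctionRight K c).homEquiv _ _).symm.injective ?_
    rw [← homEquiv_symm_comp, ← homEquiv_symm_comp]
    exact h _ ⟨(c, ⟨A, hA⟩), rfl⟩ _
  · have (c : 𝒞) : IsIso (φ.app c) := hS.isIso_of_bijective _ fun A hA => by
      let e := (evaluationAdjunctionRight K c).homEquiv A
      have : (fun u : A ⟶ G.obj c => u ≫ φ.app c) = e H ∘ (· ≫ φ) ∘ (e G).symm := by
        funext u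
        simp [e, homEquiv_symm_comp]
      rw [this]
      exact (e H).bijective.comp ((h _ ⟨(c, ⟨A, hA⟩), rfl⟩).comp (e G).symm.bijective)
    exact NatIso.isIso_of_isIso_app φ

end NLP

/-- If `K` is nearly locally `κ`-presentable and `𝒞` is a small
category, then the functor category `K^𝒞` is nearly locally `κ`-presentable. -/
theorem NLP.stmt15 {K : Type u} [Category.{v} K] (κ : Cardinal.{v})
    (h : IsNearlyLocallyPresentable κ K)
    (𝒞 : Type v) [SmallCategory 𝒞] :
    IsNearlyLocallyPresentable κ (𝒞 ⥤ K) := by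
  have := h.cocomplete
  have := h.wcwp.hasStrongEpiMonoFactorisations
  obtain ⟨S, hS, hnp⟩ := h.exists_gen
  refine ⟨h.isRegular, inferInstance, h.wcwp.functorCategory, _,
    hS.range_evaluationLeftAdjoint, ?_⟩
  rintro _ ⟨⟨c, A, hA⟩, rfl⟩
  exact NearlyPresentable.leftAdjoint_obj (evaluationAdjunctionRight K c) (hnp A hA)
end
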